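/- arXiv:0910.2062 — 2 statements merged into one kernel-verified Lean document; each statement's English description precedes it below -/
import Mathlib

section
/- The sequences α_L = (-1)^L q^{L(3L+1)/2} (1 - q^{2L+1})/(1 - q) and β_L = 1/(q;q)_L form a Bailey pair relative to a = q; that is, for all L ≥ 0, 1/(q;q)_L = Σ_{r=0}^L α_r / ((q;q)_{L-r} (q²;q)_{L+r}). -/
/-!
Since `(1 - q) (q²;q)_{L+r} = (q;q)_{L+r+1}`, the claim is `(q;q)_L S_L = 1` for
`S_L = ∑_{r ≤ L} T(L, r)`, `T(L, r) = (-1)^r q^{r(3r+1)/2} (1 - q^{2r+1}) / ((q;q)_{L-r} (q;q)_{L+r+1})`.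
In the manner of Wilf–Zeilberger, the summands satisfy
`(1 - q^{L+1}) T(L+1, r) = T(L, r) + G(L, r) - G(L, r+1)` for the certificate
`G(L, r) = (-1)^r q^{r(3r+1)/2 + L+1-r} (1 - q^r) / ((q;q)_{L+1-r} (q;q)_{L+r+1})`,
with `G(L, 0) = 0` and `G(L, L+1) = (1 - q^{L+1}) T(L+1, L+1)`. Summing over `r` gives
`(1 - q^{L+1}) S_{L+1} = S_L`, and induction on `L` finishes.
-/

/-- Finite q-shifted factorial `(x;q)_n`. -/
noncomputable def qp (q x : ℂ) (n : ℕ) : ℂ := ∏ k ∈ Finset.range n, (1 - x * q ^ k)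

open Finset

lemma qp_zero (q x : ℂ) : qp q x 0 = 1 := prod_range_zero _

lemma qp_succ (q x : ℂ) (n : ℕ) : qp q x (n + 1) = qp q x n * (1 - x * q ^ n) :=
  prod_range_succ _ _

lemma qp_succ' (q x : ℂ) (n : ℕ) : qp q x (n + 1) = (1 - x) * qp q (x * q) n := by
  rw [qp, prod_range_succ', mul_comm]
  simp only [qp, pow_zero, mul_one, pow_succ', mul_assoc]

lemma qp_self_succ (q : ℂ) (n : ℕ) : qp q q (n + 1) = qp q q n * (1 - q ^ (n + 1)) := by
  rw [qp_succ, pow_succ']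

lemma one_sub_pow_succ_ne_zero {q : ℂ} (hq : ¬IsOfFinOrder q) (n : ℕ) : 1 - q ^ (n + 1) ≠ 0 :=
  sub_ne_zero.2 fun h => hq (isOfFinOrder_iff_pow_eq_one.2 ⟨n + 1, n.succ_pos, h.symm⟩)

lemma qp_self_ne_zero {q : ℂ} (hq : ¬IsOfFinOrder q) (n : ℕ) : qp q q n ≠ 0 := by
  induction n with
  | zero => simp [qp_zero]
  | succ n ih => rw [qp_self_succ]; exact mul_ne_zero ih (one_sub_pow_succ_ne_zero hq n)

lemma pentagonal_succ (r : ℕ) :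
    (r + 1) * (3 * (r + 1) + 1) / 2 = r * (3 * r + 1) / 2 + (3 * r + 2) := by
  rw [show (r + 1) * (3 * (r + 1) + 1) = r * (3 * r + 1) + (3 * r + 2) * 2 by ring,
    Nat.add_mul_div_right _ _ two_pos]

namespace BaileyPairB3

noncomputable def summand (q : ℂ) (L r : ℕ) : ℂ :=
  (-1) ^ r * q ^ (r * (3 * r + 1) / 2) * (1 - q ^ (2 * r + 1)) /
    (qp q q (L - r) * qp q q (L + r + 1))

noncomputable def certificate (q : ℂ) (L r : ℕ) : ℂ :=
  (-1) ^ r * q ^ (r * (3 * r + 1) / 2 + (L + 1 - r)) * (1 - q ^ r) /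
    (qp q q (L + 1 - r) * qp q q (L + r + 1))

variable {q : ℂ}

lemma certificate_zero (L : ℕ) : certificate q L 0 = 0 := by
  simp [certificate]

lemma one_sub_pow_mul_summand_succ (hq : ¬IsOfFinOrder q) {L r : ℕ} (hr : r ≤ L) :
    (1 - q ^ (L + 1)) * summand q (L + 1) r
      = summand q L r + (certificate q L r - certificate q L (r + 1)) := by
  obtain ⟨d, rfl⟩ := Nat.exists_eq_add_of_le hr
  simp only [summand, certificate, pentagonal_succ,
    show r + d + 1 - r = d + 1 by omega, show r + d - r = d by omega,
    show r + d + 1 - (r + 1) = d by omega, show r + d + 1 + r + 1 = r + d + r + 1 + 1 by omega,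
    show r + d + (r + 1) + 1 = r + d + r + 1 + 1 by omega]
  have hA := qp_self_ne_zero hq d
  have hB := qp_self_ne_zero hq (r + d + r + 1)
  have h1 := one_sub_pow_succ_ne_zero hq d
  have h2 := one_sub_pow_succ_ne_zero hq (r + d + r + 1)
  rw [qp_self_succ q (r + d + r + 1), qp_self_succ q d]
  field_simp
  ring

lemma certificate_self_succ (hq : ¬IsOfFinOrder q) (L : ℕ) :
    certificate q L (L + 1) = (1 - q ^ (L + 1)) * summand q (L + 1) (L + 1) := by
  simp only [summand, certificate, Nat.sub_self, qp_zero, add_zero, one_mul,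
    show L + (L + 1) + 1 = L + L + 1 + 1 by omega,
    show L + 1 + (L + 1) + 1 = L + L + 1 + 1 + 1 by omega,
    show 2 * (L + 1) + 1 = L + L + 1 + 1 + 1 by omega]
  have hB := qp_self_ne_zero hq (L + L + 1 + 1)
  have hX := one_sub_pow_succ_ne_zero hq (L + L + 1 + 1)
  rw [qp_self_succ q (L + L + 1 + 1)]
  field_simp

lemma qp_mul_sum_summand (hq : ¬IsOfFinOrder q) (L : ℕ) :
    qp q q L * ∑ r ∈ range (L + 1), summand q L r = 1 := by
  induction L with
  | zero =>
    have h := one_sub_pow_succ_ne_zero hq 0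
    simp only [zero_add, pow_one] at h
    simp [summand, qp_zero, qp_self_succ, h]
  | succ L ih =>
    have telescope : (1 - q ^ (L + 1)) * ∑ r ∈ range (L + 1 + 1), summand q (L + 1) r
        = ∑ r ∈ range (L + 1), summand q L r := by
      rw [mul_sum, sum_range_succ, ← certificate_self_succ hq,
        sum_congr rfl fun r hr =>
          one_sub_pow_mul_summand_succ hq (Nat.lt_succ_iff.1 (mem_range.1 hr)),
        sum_add_distrib, sum_range_sub', certificate_zero]
      ring
    rw [qp_self_succ, mul_assoc, telescope, ih]

end BaileyPairB3

theorem rogers_bailey_pair_B3_general (q : ℂ) (hq1 : ‖q‖ < 1) (L : ℕ) :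
    (1 : ℂ) / qp q q L =
      ∑ r ∈ Finset.range (L + 1),
        ((-1) ^ r * q ^ (r * (3 * r + 1) / 2) * (1 - q ^ (2 * r + 1)) / (1 - q)) /
        (qp q q (L - r) * qp q (q ^ 2) (L + r)) := by
  have hq : ¬IsOfFinOrder q := fun h => hq1.ne h.norm_eq_one
  rw [← eq_one_div_of_mul_eq_one_right (BaileyPairB3.qp_mul_sum_summand hq L)]
  refine sum_congr rfl fun r _ => ?_
  rw [BaileyPairB3.summand, div_div, qp_succ', ← pow_two]
  ring

/-- Rogers' Bailey pair B(3) relative to `a = q`. -/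
theorem rogers_bailey_pair_B3 (q : ℂ) (hq0 : 0 < ‖q‖) (hq1 : ‖q‖ < 1) (L : ℕ) :
    (1 : ℂ) / qp q q L =
      ∑ r ∈ Finset.range (L + 1),
        ((-1) ^ r * q ^ (r * (3 * r + 1) / 2) * (1 - q ^ (2 * r + 1)) / (1 - q)) /
        (qp q q (L - r) * qp q (q ^ 2) (L + r)) :=
  rogers_bailey_pair_B3_general q hq1 L
end

section
/- For coprime integers 1 ≤ p < p', integers 1 ≤ b, s ≤ p'-1, 0 ≤ r ≤ p-1, and L ≥ 0 with L+s+b even, the configuration sum satisfies the symmetry X_{r,s}^{(p,p')}(L,b;q) = q^{(L² - (b-s)²)/4} X_{b-r,s}^{(p'-p,p')}(L,b;1/q), where X_{r,s}^{(p,p')}(L,b;q) = Σ_{j∈ℤ} [ q^{j(pp'j + p'r - ps)} C(L, (L+s-b)/2 - p'j)_q - q^{(pj+r)(p'j+s)} C(L, (L-s-b)/2 - p'j)_q ]. -/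
/-- Gaussian binomial coefficient `C(n,k)_q = (q^{n-k+1};q)_k / (q;q)_k` for `0 ≤ k ≤ n`,
and `0` otherwise. -/
noncomputable def gbin (q : ℂ) (n : ℕ) (k : ℤ) : ℂ :=
  if 0 ≤ k ∧ k ≤ (n : ℤ) then qp q (q ^ (n + 1 - k.toNat)) k.toNat / qp q q k.toNat else 0

/-- One-dimensional configuration sums `X_{r,s}^{(p,p')}(L,b;q)` of the ABF model. -/
noncomputable def X (q : ℂ) (p p' : ℕ) (r : ℤ) (s b L : ℕ) : ℂ :=
  ∑' j : ℤ,
    (q ^ (j * ((p : ℤ) * p' * j + (p' : ℤ) * r - (p : ℤ) * s)) *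
        gbin q L (((L : ℤ) + s - b) / 2 - (p' : ℤ) * j) -
      q ^ (((p : ℤ) * j + r) * ((p' : ℤ) * j + s)) *
        gbin q L (((L : ℤ) - s - b) / 2 - (p' : ℤ) * j))

/-!
Inverting `q` in a Gaussian binomial only multiplies it by a power of `q`:
`C(n,k)_{1/q} = q^{-k(n-k)} C(n,k)_q`. Applying this to every binomial of `X^{(p'-p,p')}_{b-r,s}(L,b;1/q)`,
the two sums agree term by term: writing `L + s - b = 2A` and `L - s - b = 2B`, so that
`(L² - (b-s)²)/4 = A(L-A)`, the exponents of matching terms coincide as polynomials in `j, A, B`.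
-/

lemma qp_inv_pow (q : ℂ) (hq : q ≠ 0) (a m : ℕ) :
    qp q⁻¹ (q⁻¹ ^ a) m = (∏ i ∈ Finset.range m, -(q ^ (a + i))⁻¹) * qp q (q ^ a) m := by
  unfold qp
  rw [← Finset.prod_mul_distrib]
  refine Finset.prod_congr rfl fun i _ => ?_
  have : q ^ (a + i) ≠ 0 := pow_ne_zero _ hq
  rw [inv_pow, inv_pow, pow_add]
  field_simp
  ring

lemma prod_neg_inv_pow_add (q : ℂ) (a c m : ℕ) :
    ∏ i ∈ Finset.range m, -(q ^ (c + a + i))⁻¹ =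
      (q ^ c)⁻¹ ^ m * ∏ i ∈ Finset.range m, -(q ^ (a + i))⁻¹ := by
  rw [← Finset.card_range m, ← Finset.prod_const, Finset.card_range, ← Finset.prod_mul_distrib]
  refine Finset.prod_congr rfl fun i _ => ?_
  rw [add_assoc, pow_add, mul_inv]
  ring

lemma gbin_inv (q : ℂ) (hq : q ≠ 0) (n : ℕ) (k : ℤ) :
    gbin q⁻¹ n k = q ^ (-(k * (n - k))) * gbin q n k := by
  unfold gbin
  split_ifs with hk
  · obtain ⟨m, rfl⟩ := Int.eq_ofNat_of_zero_le hk.1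
    have hmn : m ≤ n := by omega
    have hP : ∏ i ∈ Finset.range m, -(q ^ (1 + i))⁻¹ ≠ 0 :=
      Finset.prod_ne_zero_iff.mpr fun i _ => by simp [hq]
    have hnum := qp_inv_pow q hq (n - m + 1) m
    rw [prod_neg_inv_pow_add] at hnum
    have hden : qp q⁻¹ q⁻¹ m = (∏ i ∈ Finset.range m, -(q ^ (1 + i))⁻¹) * qp q q m := by
      simpa using qp_inv_pow q hq 1 m
    have hexp : q ^ (-((m : ℤ) * (n - m))) = (q ^ (n - m))⁻¹ ^ m := by
      rw [← Nat.cast_sub hmn, ← Nat.cast_mul, zpow_neg, zpow_natCast, inv_pow, ← pow_mul,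
        Nat.mul_comm]
    simp only [Int.toNat_natCast]
    rw [show n + 1 - m = n - m + 1 by omega, hnum, hden, hexp, mul_comm ((q ^ (n - m))⁻¹ ^ m),
      mul_assoc, mul_div_mul_left _ _ hP, mul_div_assoc]
  · rw [mul_zero]

lemma zpow_mul_inv_zpow_mul_gbin_inv (q : ℂ) (hq : q ≠ 0) (e f : ℤ) (n : ℕ) (k : ℤ) :
    q ^ e * (q⁻¹ ^ f * gbin q⁻¹ n k) = q ^ (e - f - k * (n - k)) * gbin q n k := by
  rw [gbin_inv q hq, inv_zpow', ← mul_assoc, ← mul_assoc, ← zpow_add₀ hq, ← zpow_add₀ hq]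
  ring_nf

lemma configuration_summand_duality (q : ℂ) (hq : q ≠ 0) (p p' r s b A B j : ℤ) (L : ℕ)
    (hL : (L : ℤ) = A + B + b) (hs : s = A - B) :
    q ^ (j * (p * p' * j + p' * r - p * s)) * gbin q L (A - p' * j) -
        q ^ ((p * j + r) * (p' * j + s)) * gbin q L (B - p' * j) =
      q ^ (A * (L - A)) *
        (q⁻¹ ^ (j * ((p' - p) * p' * j + p' * (b - r) - (p' - p) * s)) * gbin q⁻¹ L (A - p' * j) -
          q⁻¹ ^ (((p' - p) * j + (b - r)) * (p' * j + s)) * gbin q⁻¹ L (B - p' * j)) := by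
  rw [mul_sub (q ^ (A * (L - A))), zpow_mul_inv_zpow_mul_gbin_inv q hq,
    zpow_mul_inv_zpow_mul_gbin_inv q hq, hL, hs]
  congr 3 <;> ring

theorem configuration_sum_symmetry_general (q : ℂ) (hq : q ≠ 0)
    (p p' r s b L : ℕ) (hpp' : p < p') (hpar : (L + s + b) % 2 = 0) :
    X q p p' (r : ℤ) s b L =
      q ^ (((L : ℤ) ^ 2 - ((b : ℤ) - s) ^ 2) / 4) * X q⁻¹ (p' - p) p' ((b : ℤ) - r) s b L := by
  set A := ((L : ℤ) + s - b) / 2 with hA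
  set B := ((L : ℤ) - s - b) / 2 with hB
  have hnorm : ((L : ℤ) ^ 2 - ((b : ℤ) - s) ^ 2) / 4 = A * (L - A) := by
    have h2A : 2 * A = (L : ℤ) + s - b := by omega
    rw [show (L : ℤ) ^ 2 - ((b : ℤ) - s) ^ 2 = 4 * (A * (L - A)) by
      linear_combination (2 * A - L + s - b) * h2A]
    exact Int.mul_ediv_cancel_left _ four_ne_zero
  simp only [X]
  rw [hnorm, Nat.cast_sub hpp'.le, ← tsum_mul_left]
  exact tsum_congr fun j =>
    configuration_summand_duality q hq _ _ _ _ _ A B j L (by omega) (by omega)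

/-- the duality symmetry
`X_{r,s}^{(p,p')}(L,b;q) = q^{(L²-(b-s)²)/4} X_{b-r,s}^{(p'-p,p')}(L,b;1/q)`. -/
theorem configuration_sum_symmetry (q : ℂ) (hq : q ≠ 0)
    (hroot : ∀ n : ℕ, 0 < n → q ^ n ≠ 1)
    (p p' r s b L : ℕ) (hp : 1 ≤ p) (hpp' : p < p') (hcop : Nat.Coprime p p')
    (hb1 : 1 ≤ b) (hb2 : b ≤ p' - 1) (hs1 : 1 ≤ s) (hs2 : s ≤ p' - 1)
    (hr : r ≤ p - 1) (hpar : (L + s + b) % 2 = 0) :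
    X q p p' (r : ℤ) s b L =
      q ^ (((L : ℤ) ^ 2 - ((b : ℤ) - s) ^ 2) / 4) * X q⁻¹ (p' - p) p' ((b : ℤ) - r) s b L :=
  configuration_sum_symmetry_general q hq p p' r s b L hpp' hpar
end
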